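/- Let □ = Σ_{a,b} η^{ab} ∂²/∂y^a∂y^b - (1/l²) ∂²/∂z² and h = -Σ_a y^a ∂/∂y^a - (z+1)∂/∂z act on ℂ[[y^1,...,y^d, z]], with l ≠ 0 and η nondegenerate, d ≥ 1. Then for every z-independent φ₀ ∈ ℂ[[y]] with (Σ η^{ab} ∂²/∂y^a∂y^b) φ₀ = 0 there exists a unique φ ∈ ℂ[[y,z]] satisfying h φ = 0, □ φ = 0 and whose z-independent part has traceless component equal to φ₀. -/

import Mathlib

namespace HSlift

variable {d : ℕ}

abbrev W (d : ℕ) := MvPowerSeries (Fin d ⊕ Unit) ℂ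

noncomputable def pd (i : Fin d ⊕ Unit) (f : W d) : W d :=
  fun m => ((m i : ℂ) + 1) * f (m + Finsupp.single i 1)

noncomputable def hOp (f : W d) : W d :=
  -(∑ a : Fin d, MvPowerSeries.X (Sum.inl a) * pd (Sum.inl a) f)
    - (pd (Sum.inr ()) f + MvPowerSeries.X (Sum.inr ()) * pd (Sum.inr ()) f)

noncomputable def boxY (η : Fin d → Fin d → ℂ) (f : W d) : W d :=
  ∑ a, ∑ b, η a b • pd (Sum.inl a) (pd (Sum.inl b) f)

noncomputable def boxOp (η : Fin d → Fin d → ℂ) (l : ℝ) (f : W d) : W d :=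
  boxY η f - ((l : ℂ) ^ 2)⁻¹ • pd (Sum.inr ()) (pd (Sum.inr ()) f)

noncomputable def zRes (f : W d) : W d :=
  fun m => if m (Sum.inr ()) = 0 then f m else 0

noncomputable def yy (ηinv : Fin d → Fin d → ℂ) : W d :=
  ∑ a, ∑ b, ηinv a b • (MvPowerSeries.X (Sum.inl a) * MvPowerSeries.X (Sum.inl b))

/-! ### basic index bookkeeping -/

def ydeg (m : (Fin d ⊕ Unit) →₀ ℕ) : ℕ := ∑ a : Fin d, m (Sum.inl a)

open MvPowerSeries

lemma Xmul_coeff (i : Fin d ⊕ Unit) (f : W d) (m : (Fin d ⊕ Unit) →₀ ℕ) :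
    ((X i : W d) * f) m = if m i = 0 then 0 else f (m - Finsupp.single i 1) := by
  have h : ((X i : W d) * f) m = coeff m (X (σ := Fin d ⊕ Unit) (R := ℂ) i * f) := rfl
  rw [h, X, coeff_monomial_mul]
  by_cases hm : m i = 0
  · rw [if_neg, if_pos hm]
    intro hle
    have := Finsupp.single_le_iff.mp hle
    omega
  · rw [if_pos, if_neg hm, one_mul]; rfl
    exact Finsupp.single_le_iff.mpr (by omega)

lemma sub_add_single (i : Fin d ⊕ Unit) (m : (Fin d ⊕ Unit) →₀ ℕ) (h : m i ≠ 0) :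
    m - Finsupp.single i 1 + Finsupp.single i 1 = m := by
  ext j
  simp only [Finsupp.add_apply, Finsupp.tsub_apply, Finsupp.single_apply]
  by_cases hij : i = j
  · subst hij; simp; omega
  · simp [hij]

lemma add_sub_single (i : Fin d ⊕ Unit) (m : (Fin d ⊕ Unit) →₀ ℕ) :
    m + Finsupp.single i 1 - Finsupp.single i 1 = m := by
  ext j
  simp only [Finsupp.add_apply, Finsupp.tsub_apply, Finsupp.single_apply]
  omega

lemma sub_add_swap (i j : Fin d ⊕ Unit) (m : (Fin d ⊕ Unit) →₀ ℕ) (hij : i ≠ j) :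
    m + Finsupp.single i 1 - Finsupp.single j 1
      = m - Finsupp.single j 1 + Finsupp.single i 1 := by
  ext x
  simp only [Finsupp.add_apply, Finsupp.tsub_apply, Finsupp.single_apply]
  split_ifs with h1 h2 h2 <;> first
    | omega
    | exact absurd (h1.trans h2.symm) hij

lemma ydeg_add_single_inl (a : Fin d) (m : (Fin d ⊕ Unit) →₀ ℕ) :
    ydeg (m + Finsupp.single (Sum.inl a) 1) = ydeg m + 1 := by
  unfold ydeg
  rw [Finset.sum_congr rfl (fun b _ => by
    rw [Finsupp.add_apply, Finsupp.single_apply])]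
  rw [Finset.sum_add_distrib]
  congr 1
  simp

lemma ydeg_add_single_inr (m : (Fin d ⊕ Unit) →₀ ℕ) :
    ydeg (m + Finsupp.single (Sum.inr ()) 1) = ydeg m := by
  unfold ydeg
  apply Finset.sum_congr rfl
  intro b _
  rw [Finsupp.add_apply, Finsupp.single_apply]
  simp

lemma ydeg_sub_single_inl (a : Fin d) (m : (Fin d ⊕ Unit) →₀ ℕ) (h : m (Sum.inl a) ≠ 0) :
    ydeg (m - Finsupp.single (Sum.inl a) 1) = ydeg m - 1 := by
  have := ydeg_add_single_inl a (m - Finsupp.single (Sum.inl a) 1)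
  rw [sub_add_single _ _ h] at this
  omega

lemma zcoord_add_single_inl (a : Fin d) (m : (Fin d ⊕ Unit) →₀ ℕ) :
    (m + Finsupp.single (Sum.inl a) 1 : (Fin d ⊕ Unit) →₀ ℕ) (Sum.inr ()) = m (Sum.inr ()) := by
  simp [Finsupp.add_apply, Finsupp.single_apply]

lemma zcoord_sub_single_inl (a : Fin d) (m : (Fin d ⊕ Unit) →₀ ℕ) :
    (m - Finsupp.single (Sum.inl a) 1 : (Fin d ⊕ Unit) →₀ ℕ) (Sum.inr ()) = m (Sum.inr ()) := by
  simp [Finsupp.tsub_apply, Finsupp.single_apply]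

lemma W_sum_apply {α : Type*} (s : Finset α) (g : α → W d) (m : (Fin d ⊕ Unit) →₀ ℕ) :
    (∑ c ∈ s, g c) m = ∑ c ∈ s, g c m :=
  map_sum (MvPowerSeries.coeff (R := ℂ) m) g s

lemma W_add_apply (f g : W d) (m : (Fin d ⊕ Unit) →₀ ℕ) : (f + g) m = f m + g m := rfl

lemma W_sub_apply (f g : W d) (m : (Fin d ⊕ Unit) →₀ ℕ) : (f - g) m = f m - g m := rfl

lemma W_neg_apply (f : W d) (m : (Fin d ⊕ Unit) →₀ ℕ) : (-f) m = -f m := rfl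

lemma W_smul_apply (c : ℂ) (f : W d) (m : (Fin d ⊕ Unit) →₀ ℕ) : (c • f) m = c • f m := rfl

/-! ### linearity of the basic operators -/

lemma pd_add (i : Fin d ⊕ Unit) (f g : W d) : pd i (f + g) = pd i f + pd i g := by
  funext m
  show ((m i : ℂ) + 1) * (f _ + g _) = pd i f m + pd i g m
  unfold pd; ring

lemma pd_smul (i : Fin d ⊕ Unit) (c : ℂ) (f : W d) : pd i (c • f) = c • pd i f := by
  funext m
  show ((m i : ℂ) + 1) * (c * f _) = c * pd i f m
  unfold pd; ring

lemma pd_zero (i : Fin d ⊕ Unit) : pd i (0 : W d) = 0 := by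
  funext m; show _ * (0:ℂ) = 0; ring

lemma pd_sub (i : Fin d ⊕ Unit) (f g : W d) : pd i (f - g) = pd i f - pd i g := by
  funext m
  show ((m i : ℂ) + 1) * (f _ - g _) = pd i f m - pd i g m
  unfold pd; ring

lemma pd_sum {α : Type*} (i : Fin d ⊕ Unit) (s : Finset α) (F : α → W d) :
    pd i (∑ x ∈ s, F x) = ∑ x ∈ s, pd i (F x) := by
  funext m
  rw [W_sum_apply]
  show _ * (∑ x ∈ s, F x) _ = _
  rw [W_sum_apply, Finset.mul_sum]
  rfl

lemma pd_ite (i : Fin d ⊕ Unit) (p : Prop) [Decidable p] (f : W d) :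
    pd i (if p then f else 0) = if p then pd i f else 0 := by
  split <;> simp [pd_zero]

lemma Xmul_ite (j : Fin d ⊕ Unit) (p : Prop) [Decidable p] (f : W d) :
    (X j : W d) * (if p then f else 0) = if p then (X j : W d) * f else 0 := by
  split <;> simp

/-! ### the commutator `[∂_i, X_j] = δ_ij` -/

lemma pd_coeff (i : Fin d ⊕ Unit) (f : W d) (m : (Fin d ⊕ Unit) →₀ ℕ) :
    pd i f m = ((m i : ℂ) + 1) * f (m + Finsupp.single i 1) := rfl

lemma pdX (i j : Fin d ⊕ Unit) (f : W d) :
    pd i ((X j : W d) * f) = (if i = j then f else 0) + (X j : W d) * pd i f := by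
  funext m
  have R : ((if i = j then f else 0) + (X j : W d) * pd i f) m
      = (if i = j then f m else 0) + ((X j : W d) * pd i f) m := by
    rw [W_add_apply]; congr 1; split <;> rfl
  rw [pd_coeff, R, Xmul_coeff, Xmul_coeff]
  by_cases hij : i = j
  · subst hij
    have h1 : (m + Finsupp.single i 1 : (Fin d ⊕ Unit) →₀ ℕ) i = m i + 1 := by
      simp [Finsupp.add_apply, Finsupp.single_apply]
    rw [h1, if_neg (by omega), add_sub_single, if_pos rfl]
    by_cases hm : m i = 0
    · rw [if_pos hm, hm]; push_cast; ring
    · rw [if_neg hm, pd_coeff, sub_add_single i m hm]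
      have h2 : (m - Finsupp.single i 1 : (Fin d ⊕ Unit) →₀ ℕ) i = m i - 1 := by
        simp [Finsupp.tsub_apply, Finsupp.single_apply]
      rw [h2, Nat.cast_sub (by omega)]
      push_cast; ring
  · have h1 : (m + Finsupp.single i 1 : (Fin d ⊕ Unit) →₀ ℕ) j = m j := by
      simp [Finsupp.add_apply, Finsupp.single_apply, hij]
    rw [h1, if_neg hij]
    by_cases hm : m j = 0
    · rw [if_pos hm, if_pos hm]; simp
    · rw [if_neg hm, if_neg hm, pd_coeff, sub_add_swap i j m hij]
      have h2 : (m - Finsupp.single j 1 : (Fin d ⊕ Unit) →₀ ℕ) i = m i := by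
        rw [Finsupp.tsub_apply, Finsupp.single_apply, if_neg (fun h : j = i => hij h.symm)]
        simp
      rw [h2]
      simp


/-! ### Euler operator -/

noncomputable def Eop (f : W d) : W d := fun m => (ydeg m : ℂ) * f m

lemma Xpd_diag (a : Fin d) (f : W d) (m : (Fin d ⊕ Unit) →₀ ℕ) :
    ((X (Sum.inl a) : W d) * pd (Sum.inl a) f) m = (m (Sum.inl a) : ℂ) * f m := by
  rw [Xmul_coeff]
  by_cases hm : m (Sum.inl a) = 0
  · rw [if_pos hm, hm]; simp
  · rw [if_neg hm, pd_coeff, sub_add_single _ _ hm, Finsupp.tsub_apply, Finsupp.single_apply,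
      if_pos rfl, Nat.cast_sub (by omega)]
    push_cast; ring

lemma Eop_eq_sum (f : W d) :
    Eop f = ∑ a : Fin d, (X (Sum.inl a) : W d) * pd (Sum.inl a) f := by
  funext m
  rw [W_sum_apply, Finset.sum_congr rfl (fun a _ => Xpd_diag a f m)]
  show (ydeg m : ℂ) * f m = _
  rw [← Finset.sum_mul]
  unfold ydeg
  push_cast
  ring

lemma Eop_add (f g : W d) : Eop (f + g) = Eop f + Eop g := by
  funext m; show (ydeg m : ℂ) * (f m + g m) = (ydeg m : ℂ) * f m + (ydeg m : ℂ) * g m; ring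

lemma Eop_smul (c : ℂ) (f : W d) : Eop (c • f) = c • Eop f := by
  funext m; show (ydeg m : ℂ) * (c * f m) = c * ((ydeg m : ℂ) * f m); ring

/-! ### symmetry of the inverse metric -/



section Metric
open Matrix

variable (η ηinv : Fin d → Fin d → ℂ)
variable (hsymm : ∀ a b, η a b = η b a)
variable (hinv : ∀ a c, (∑ b, η a b * ηinv b c) = if a = c then 1 else 0)

include hinv in
lemma hinv' : ∀ a c, (∑ b, ηinv a b * η b c) = if a = c then 1 else 0 := by
  have hAB : (Matrix.of η) * (Matrix.of ηinv) = 1 := by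
    ext a c
    simp only [Matrix.mul_apply, Matrix.of_apply, Matrix.one_apply]
    exact hinv a c
  have hBA := mul_eq_one_comm.mp hAB
  intro a c
  have h2 := congrFun (congrFun hBA a) c
  simpa only [Matrix.mul_apply, Matrix.of_apply, Matrix.one_apply] using h2

include hsymm hinv in
lemma hsymminv : ∀ a b, ηinv a b = ηinv b a := by
  have hAB : (Matrix.of η) * (Matrix.of ηinv) = 1 := by
    ext a c
    simp only [Matrix.mul_apply, Matrix.of_apply, Matrix.one_apply]
    exact hinv a c
  have hAT : (Matrix.of η)ᵀ = Matrix.of η := by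
    ext a c; exact hsymm c a
  have hTB : (Matrix.of ηinv)ᵀ * (Matrix.of η) = 1 := by
    calc (Matrix.of ηinv)ᵀ * (Matrix.of η) = (Matrix.of ηinv)ᵀ * (Matrix.of η)ᵀ := by rw [hAT]
    _ = ((Matrix.of η) * (Matrix.of ηinv))ᵀ := by rw [Matrix.transpose_mul]
    _ = 1 := by rw [hAB, Matrix.transpose_one]
  have hT : (Matrix.of ηinv)ᵀ = Matrix.of ηinv := by
    calc (Matrix.of ηinv)ᵀ = (Matrix.of ηinv)ᵀ * ((Matrix.of η) * (Matrix.of ηinv)) := by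
          rw [hAB, mul_one]
    _ = ((Matrix.of ηinv)ᵀ * (Matrix.of η)) * (Matrix.of ηinv) := by rw [mul_assoc]
    _ = Matrix.of ηinv := by rw [hTB, one_mul]
  intro a b
  exact (congrFun (congrFun hT b) a : _)

end Metric

/-! ### helpers for sums of ites -/

lemma smul_ite0 (c : ℂ) (p : Prop) [Decidable p] (f : W d) :
    c • (if p then f else 0) = if p then c • f else 0 := by split <;> simp

lemma ite_smul0 (p : Prop) [Decidable p] (f : W d) :
    (if p then (1:ℂ) else 0) • f = if p then f else 0 := by split <;> simp

lemma sum_ite_const {α : Type*} (s : Finset α) (p : Prop) [Decidable p] (F : α → W d) :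
    (∑ x ∈ s, if p then F x else 0) = if p then ∑ x ∈ s, F x else 0 := by split <;> simp

lemma mul_smul_comm' (c : ℂ) (f g : W d) : f * (c • g) = c • (f * g) := mul_smul_comm c f g

/-! ### the quadruple derivative expansion -/

lemma ite_add0 (p : Prop) [Decidable p] (u v : W d) :
    (if p then u + v else 0) = (if p then u else 0) + (if p then v else 0) := by
  split <;> simp

lemma quad (a b c e : Fin d) (g : W d) :
    pd (Sum.inl a) (pd (Sum.inl b) ((X (Sum.inl c) : W d) * ((X (Sum.inl e) : W d) * g))) =
      ((if b = c then (if a = e then g else 0) else 0)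
    + (if b = c then (X (Sum.inl e) : W d) * pd (Sum.inl a) g else 0)
    + (if b = e then (if a = c then g else 0) else 0)
    + (if a = c then (X (Sum.inl e) : W d) * pd (Sum.inl b) g else 0)
    + (if b = e then (X (Sum.inl c) : W d) * pd (Sum.inl a) g else 0)
    + (if a = e then (X (Sum.inl c) : W d) * pd (Sum.inl b) g else 0))
    + (X (Sum.inl c) : W d) * ((X (Sum.inl e) : W d) * pd (Sum.inl a) (pd (Sum.inl b) g)) := by
  simp only [pdX, pd_add, pd_ite, mul_add, Xmul_ite, Sum.inl.injEq, ite_add0]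
  abel


/-! ### contraction sublemmas -/

section Contraction

variable (η ηinv : Fin d → Fin d → ℂ)

lemma yy_mul (g : W d) :
    yy ηinv * g
      = ∑ c, ∑ e, ηinv c e • ((X (Sum.inl c) : W d) * ((X (Sum.inl e) : W d) * g)) := by
  rw [yy, Finset.sum_mul]
  refine Finset.sum_congr rfl fun c _ => ?_
  rw [Finset.sum_mul]
  refine Finset.sum_congr rfl fun e _ => ?_
  rw [smul_mul_assoc, mul_assoc]

lemma sum2_comm (F : Fin d → Fin d → W d) :
    ∑ a, ∑ b, F a b = ∑ b, ∑ a, F a b := Finset.sum_comm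

lemma S1 (hinv : ∀ a c, (∑ b, η a b * ηinv b c) = if a = c then 1 else 0) (g : W d) :
    (∑ a, ∑ b, ∑ c, ∑ e, (η a b * ηinv c e) • (if b = c then (if a = e then g else 0) else 0))
      = ((d:ℕ):ℂ) • g := by
  have step1 : ∀ a b : Fin d,
      (∑ c, ∑ e, (η a b * ηinv c e) • (if b = c then (if a = e then g else 0) else 0))
        = (η a b * ηinv b a) • g := by
    intro a b
    have inner : ∀ c : Fin d,
        (∑ e, (η a b * ηinv c e) • (if b = c then (if a = e then g else 0) else 0))
          = if b = c then (η a b * ηinv c a) • g else 0 := by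
      intro c
      by_cases hbc : b = c
      · rw [if_pos hbc]
        rw [Finset.sum_congr rfl (fun e _ => by rw [if_pos hbc, smul_ite0])]
        rw [Finset.sum_ite_eq]; simp
      · rw [if_neg hbc]
        rw [Finset.sum_congr rfl (fun e _ => by rw [if_neg hbc, smul_zero])]
        simp
    rw [Finset.sum_congr rfl fun c _ => inner c, Finset.sum_ite_eq]
    simp
  rw [Finset.sum_congr rfl fun a _ => Finset.sum_congr rfl fun b _ => step1 a b]
  have hrow : ∀ a : Fin d, (∑ b, (η a b * ηinv b a) • g) = g := by
    intro a
    rw [← Finset.sum_smul, hinv a a]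
    simp
  rw [Finset.sum_congr rfl fun a _ => hrow a, Finset.sum_const, Finset.card_univ,
    Fintype.card_fin, Nat.cast_smul_eq_nsmul]

lemma S3 (hsymminv : ∀ a b, ηinv a b = ηinv b a)
    (hinv : ∀ a c, (∑ b, η a b * ηinv b c) = if a = c then 1 else 0) (g : W d) :
    (∑ a, ∑ b, ∑ c, ∑ e, (η a b * ηinv c e) • (if b = e then (if a = c then g else 0) else 0))
      = ((d:ℕ):ℂ) • g := by
  have step1 : ∀ a b : Fin d,
      (∑ c, ∑ e, (η a b * ηinv c e) • (if b = e then (if a = c then g else 0) else 0))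
        = (η a b * ηinv a b) • g := by
    intro a b
    have inner : ∀ c : Fin d,
        (∑ e, (η a b * ηinv c e) • (if b = e then (if a = c then g else 0) else 0))
          = if a = c then (η a b * ηinv c b) • g else 0 := by
      intro c
      rw [Finset.sum_congr rfl (fun e _ => by rw [smul_ite0])]
      rw [Finset.sum_ite_eq]
      simp [smul_ite0]
    rw [Finset.sum_congr rfl fun c _ => inner c, Finset.sum_ite_eq]
    simp
  rw [Finset.sum_congr rfl fun a _ => Finset.sum_congr rfl fun b _ => step1 a b]
  have hrow : ∀ a : Fin d, (∑ b, (η a b * ηinv a b) • g) = g := by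
    intro a
    rw [Finset.sum_congr rfl (fun b _ => by rw [hsymminv a b]), ← Finset.sum_smul, hinv a a]
    simp
  rw [Finset.sum_congr rfl fun a _ => hrow a, Finset.sum_const, Finset.card_univ,
    Fintype.card_fin, Nat.cast_smul_eq_nsmul]

lemma S2 (hinv : ∀ a c, (∑ b, η a b * ηinv b c) = if a = c then 1 else 0) (g : W d) :
    (∑ a, ∑ b, ∑ c, ∑ e, (η a b * ηinv c e) •
        (if b = c then (X (Sum.inl e) : W d) * pd (Sum.inl a) g else 0))
      = Eop g := by
  have step1 : ∀ a : Fin d,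
      (∑ b, ∑ c, ∑ e, (η a b * ηinv c e) •
          (if b = c then (X (Sum.inl e) : W d) * pd (Sum.inl a) g else 0))
        = (X (Sum.inl a) : W d) * pd (Sum.inl a) g := by
    intro a
    have hc : ∀ b : Fin d,
        (∑ c, ∑ e, (η a b * ηinv c e) •
            (if b = c then (X (Sum.inl e) : W d) * pd (Sum.inl a) g else 0))
          = ∑ e, (η a b * ηinv b e) • ((X (Sum.inl e) : W d) * pd (Sum.inl a) g) := by
      intro b
      rw [Finset.sum_congr rfl (fun c _ => by
        rw [Finset.sum_congr rfl (fun e _ => by rw [smul_ite0]), sum_ite_const])]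
      rw [Finset.sum_ite_eq]; simp
    rw [Finset.sum_congr rfl fun b _ => hc b, sum2_comm]
    rw [Finset.sum_congr rfl (fun e _ => by rw [← Finset.sum_smul, hinv a e, ite_smul0])]
    rw [Finset.sum_ite_eq]; simp
  rw [Finset.sum_congr rfl fun a _ => step1 a, Eop_eq_sum]

lemma S5 (hsymminv : ∀ a b, ηinv a b = ηinv b a)
    (hinv : ∀ a c, (∑ b, η a b * ηinv b c) = if a = c then 1 else 0) (g : W d) :
    (∑ a, ∑ b, ∑ c, ∑ e, (η a b * ηinv c e) •
        (if b = e then (X (Sum.inl c) : W d) * pd (Sum.inl a) g else 0))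
      = Eop g := by
  have step1 : ∀ a : Fin d,
      (∑ b, ∑ c, ∑ e, (η a b * ηinv c e) •
          (if b = e then (X (Sum.inl c) : W d) * pd (Sum.inl a) g else 0))
        = (X (Sum.inl a) : W d) * pd (Sum.inl a) g := by
    intro a
    have hc : ∀ b : Fin d,
        (∑ c, ∑ e, (η a b * ηinv c e) •
            (if b = e then (X (Sum.inl c) : W d) * pd (Sum.inl a) g else 0))
          = ∑ c, (η a b * ηinv b c) • ((X (Sum.inl c) : W d) * pd (Sum.inl a) g) := by
      intro b
      refine Finset.sum_congr rfl (fun c _ => ?_)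
      rw [Finset.sum_congr rfl (fun e _ => by rw [smul_ite0]), Finset.sum_ite_eq]
      simp only [Finset.mem_univ, if_true]
      rw [hsymminv c b]
    rw [Finset.sum_congr rfl fun b _ => hc b, sum2_comm]
    rw [Finset.sum_congr rfl (fun c _ => by rw [← Finset.sum_smul, hinv a c, ite_smul0])]
    rw [Finset.sum_ite_eq]; simp
  rw [Finset.sum_congr rfl fun a _ => step1 a, Eop_eq_sum]

lemma S4 (hsymm : ∀ a b, η a b = η b a)
    (hinv : ∀ a c, (∑ b, η a b * ηinv b c) = if a = c then 1 else 0) (g : W d) :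
    (∑ a, ∑ b, ∑ c, ∑ e, (η a b * ηinv c e) •
        (if a = c then (X (Sum.inl e) : W d) * pd (Sum.inl b) g else 0))
      = Eop g := by
  have step1 : ∀ a b : Fin d,
      (∑ c, ∑ e, (η a b * ηinv c e) •
          (if a = c then (X (Sum.inl e) : W d) * pd (Sum.inl b) g else 0))
        = ∑ e, (η a b * ηinv a e) • ((X (Sum.inl e) : W d) * pd (Sum.inl b) g) := by
    intro a b
    rw [Finset.sum_congr rfl (fun c _ => by
      rw [Finset.sum_congr rfl (fun e _ => by rw [smul_ite0]), sum_ite_const])]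
    rw [Finset.sum_ite_eq]; simp
  rw [Finset.sum_congr rfl fun a _ => Finset.sum_congr rfl fun b _ => step1 a b]
  -- now ∑ a, ∑ b, ∑ e, (η a b * ηinv a e) • (X e * pd b g); contract over a
  rw [Finset.sum_congr rfl (fun a _ => sum2_comm (fun b e =>
    (η a b * ηinv a e) • ((X (Sum.inl e) : W d) * pd (Sum.inl b) g)))]
  rw [sum2_comm (fun a e => ∑ b, (η a b * ηinv a e) • ((X (Sum.inl e) : W d) * pd (Sum.inl b) g))]
  rw [Finset.sum_congr rfl (fun e _ => sum2_comm (fun a b =>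
    (η a b * ηinv a e) • ((X (Sum.inl e) : W d) * pd (Sum.inl b) g)))]
  rw [Finset.sum_congr rfl (fun e _ => Finset.sum_congr rfl (fun b _ => by
    rw [Finset.sum_congr rfl (fun a _ => by rw [hsymm a b]), ← Finset.sum_smul, hinv b e,
      ite_smul0]))]
  rw [Finset.sum_congr rfl (fun e _ => Finset.sum_ite_eq' Finset.univ e
    (fun b => (X (Sum.inl e) : W d) * pd (Sum.inl b) g))]
  simp only [Finset.mem_univ, if_true]
  rw [Eop_eq_sum]

lemma S6 (hsymm : ∀ a b, η a b = η b a) (hsymminv : ∀ a b, ηinv a b = ηinv b a)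
    (hinv : ∀ a c, (∑ b, η a b * ηinv b c) = if a = c then 1 else 0) (g : W d) :
    (∑ a, ∑ b, ∑ c, ∑ e, (η a b * ηinv c e) •
        (if a = e then (X (Sum.inl c) : W d) * pd (Sum.inl b) g else 0))
      = Eop g := by
  have step1 : ∀ a b : Fin d,
      (∑ c, ∑ e, (η a b * ηinv c e) •
          (if a = e then (X (Sum.inl c) : W d) * pd (Sum.inl b) g else 0))
        = ∑ c, (η a b * ηinv c a) • ((X (Sum.inl c) : W d) * pd (Sum.inl b) g) := by
    intro a b
    refine Finset.sum_congr rfl (fun c _ => ?_)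
    rw [Finset.sum_congr rfl (fun e _ => by rw [smul_ite0]), Finset.sum_ite_eq]
    simp
  rw [Finset.sum_congr rfl fun a _ => Finset.sum_congr rfl fun b _ => step1 a b]
  rw [sum2_comm (fun a b => ∑ c, (η a b * ηinv c a) • ((X (Sum.inl c) : W d) * pd (Sum.inl b) g))]
  rw [Finset.sum_congr rfl (fun b _ => sum2_comm (fun a c =>
    (η a b * ηinv c a) • ((X (Sum.inl c) : W d) * pd (Sum.inl b) g)))]
  rw [Finset.sum_congr rfl (fun b _ => Finset.sum_congr rfl (fun c _ => by
    rw [Finset.sum_congr rfl (fun a _ => by rw [hsymm a b, hsymminv c a]), ← Finset.sum_smul,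
      hinv b c, ite_smul0]))]
  rw [Finset.sum_congr rfl (fun b _ => Finset.sum_ite_eq Finset.univ b
    (fun c => (X (Sum.inl c) : W d) * pd (Sum.inl b) g))]
  simp only [Finset.mem_univ, if_true]
  rw [Eop_eq_sum]

lemma sum4_comm (F : Fin d → Fin d → Fin d → Fin d → W d) :
    (∑ a, ∑ b, ∑ c, ∑ e, F a b c e) = ∑ c, ∑ e, ∑ a, ∑ b, F a b c e := by
  rw [Finset.sum_congr rfl (fun a _ => sum2_comm (fun b c => ∑ e, F a b c e))]
  rw [sum2_comm (fun a c => ∑ b, ∑ e, F a b c e)]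
  refine Finset.sum_congr rfl (fun c _ => ?_)
  rw [Finset.sum_congr rfl (fun a _ => sum2_comm (fun b e => F a b c e))]
  rw [sum2_comm (fun a e => ∑ b, F a b c e)]

lemma S7 (g : W d) :
    (∑ a, ∑ b, ∑ c, ∑ e, (η a b * ηinv c e) •
        ((X (Sum.inl c) : W d) * ((X (Sum.inl e) : W d) * pd (Sum.inl a) (pd (Sum.inl b) g))))
      = yy ηinv * boxY η g := by
  rw [sum4_comm (fun a b c e => (η a b * ηinv c e) •
    ((X (Sum.inl c) : W d) * ((X (Sum.inl e) : W d) * pd (Sum.inl a) (pd (Sum.inl b) g))))]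
  rw [yy_mul]
  refine Finset.sum_congr rfl fun c _ => Finset.sum_congr rfl fun e _ => ?_
  simp only [boxY, Finset.mul_sum, mul_smul_comm, Finset.smul_sum, smul_smul]
  refine Finset.sum_congr rfl fun a _ => Finset.sum_congr rfl fun b _ => ?_
  rw [mul_comm (ηinv c e) (η a b)]

/-- The key identity `Δ (y·y · g) = 2d g + 4 E g + y·y · Δ g`. -/
lemma boxY_yy (hsymm : ∀ a b, η a b = η b a)
    (hinv : ∀ a c, (∑ b, η a b * ηinv b c) = if a = c then 1 else 0) (g : W d) :
    boxY η (yy ηinv * g)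
      = ((2*d : ℕ) : ℂ) • g + (4:ℂ) • Eop g + yy ηinv * boxY η g := by
  have hsi := hsymminv η ηinv hsymm hinv
  have e1 : boxY η (yy ηinv * g)
      = ∑ a, ∑ b, ∑ c, ∑ e, (η a b * ηinv c e) •
          pd (Sum.inl a) (pd (Sum.inl b)
            ((X (Sum.inl c) : W d) * ((X (Sum.inl e) : W d) * g))) := by
    rw [yy_mul]
    simp only [boxY, pd_sum, pd_smul, Finset.smul_sum, smul_smul]
  rw [e1]
  rw [Finset.sum_congr rfl fun a _ => Finset.sum_congr rfl fun b _ =>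
    Finset.sum_congr rfl fun c _ => Finset.sum_congr rfl fun e _ => by rw [quad]]
  simp only [smul_add, Finset.sum_add_distrib]
  rw [S1 η ηinv hinv g, S2 η ηinv hinv g, S3 η ηinv hsi hinv g, S4 η ηinv hsymm hinv g,
    S5 η ηinv hsi hinv g, S6 η ηinv hsymm hsi hinv g, S7 η ηinv g]
  push_cast
  module

end Contraction


/-! ### degree-scaling operators and projectors -/

noncomputable def Dscale (h : ℕ → ℂ) (f : W d) : W d := fun m => h (ydeg m) * f m

noncomputable def proj (k : ℕ) (f : W d) : W d := fun m => if ydeg m = k then f m else 0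

lemma coord_le_ydeg (a : Fin d) (m : (Fin d ⊕ Unit) →₀ ℕ) : m (Sum.inl a) ≤ ydeg m :=
  Finset.single_le_sum (f := fun b => m (Sum.inl b)) (fun _ _ => Nat.zero_le _)
    (Finset.mem_univ a)

lemma boxY_coeff (η : Fin d → Fin d → ℂ) (f : W d) (m : (Fin d ⊕ Unit) →₀ ℕ) :
    boxY η f m = ∑ a, ∑ b, η a b * (((m (Sum.inl a) : ℂ) + 1) *
      ((((m + Finsupp.single (Sum.inl a) 1 : (Fin d ⊕ Unit) →₀ ℕ) (Sum.inl b) : ℕ) : ℂ) + 1) *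
      f (m + Finsupp.single (Sum.inl a) 1 + Finsupp.single (Sum.inl b) 1)) := by
  show (∑ a, ∑ b, η a b • pd (Sum.inl a) (pd (Sum.inl b) f)) m = _
  rw [W_sum_apply]
  refine Finset.sum_congr rfl fun a _ => ?_
  rw [W_sum_apply]
  refine Finset.sum_congr rfl fun b _ => ?_
  rw [W_smul_apply, smul_eq_mul, pd_coeff, pd_coeff]
  ring

lemma boxY_add (η : Fin d → Fin d → ℂ) (f g : W d) :
    boxY η (f + g) = boxY η f + boxY η g := by
  funext m
  rw [W_add_apply, boxY_coeff, boxY_coeff, boxY_coeff, ← Finset.sum_add_distrib]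
  refine Finset.sum_congr rfl fun a _ => ?_
  rw [← Finset.sum_add_distrib]
  refine Finset.sum_congr rfl fun b _ => ?_
  rw [W_add_apply]
  ring

lemma boxY_smul (η : Fin d → Fin d → ℂ) (c : ℂ) (f : W d) :
    boxY η (c • f) = c • boxY η f := by
  funext m
  rw [W_smul_apply, smul_eq_mul, boxY_coeff, boxY_coeff, Finset.mul_sum]
  refine Finset.sum_congr rfl fun a _ => ?_
  rw [Finset.mul_sum]
  refine Finset.sum_congr rfl fun b _ => ?_
  rw [W_smul_apply, smul_eq_mul]
  ring

lemma boxY_zero (η : Fin d → Fin d → ℂ) : boxY η (0 : W d) = 0 := by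
  funext m
  rw [boxY_coeff]
  refine Finset.sum_eq_zero fun a _ => Finset.sum_eq_zero fun b _ => ?_
  show η a b * (_ * _ * (0 : W d) _) = (0 : W d) m
  show η a b * (_ * _ * (0:ℂ)) = (0:ℂ)
  ring

lemma Dscale_boxY (η : Fin d → Fin d → ℂ) (h : ℕ → ℂ) (f : W d) :
    boxY η (Dscale h f) = Dscale (fun k => h (k + 2)) (boxY η f) := by
  funext m
  show boxY η (Dscale h f) m = h (ydeg m + 2) * boxY η f m
  rw [boxY_coeff, boxY_coeff, Finset.mul_sum]
  refine Finset.sum_congr rfl fun a _ => ?_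
  rw [Finset.mul_sum]
  refine Finset.sum_congr rfl fun b _ => ?_
  have hD : Dscale h f (m + Finsupp.single (Sum.inl a) 1 + Finsupp.single (Sum.inl b) 1)
      = h (ydeg m + 2) * f (m + Finsupp.single (Sum.inl a) 1 + Finsupp.single (Sum.inl b) 1) := by
    show h (ydeg _) * _ = _
    rw [ydeg_add_single_inl, ydeg_add_single_inl]
  rw [hD]
  ring

lemma DscaleX (h : ℕ → ℂ) (a : Fin d) (f : W d) :
    Dscale h ((X (Sum.inl a) : W d) * f)
      = (X (Sum.inl a) : W d) * Dscale (fun k => h (k + 1)) f := by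
  funext m
  show h (ydeg m) * ((X (Sum.inl a) : W d) * f) m = _
  rw [Xmul_coeff, Xmul_coeff]
  by_cases hm : m (Sum.inl a) = 0
  · rw [if_pos hm, if_pos hm, mul_zero]
  · rw [if_neg hm, if_neg hm]
    show _ = h (ydeg (m - Finsupp.single (Sum.inl a) 1) + 1) * f _
    rw [ydeg_sub_single_inl a m hm]
    have h1 : 1 ≤ ydeg m := le_trans (by omega) (coord_le_ydeg a m)
    have : ydeg m - 1 + 1 = ydeg m := by omega
    rw [this]

lemma Dscale_sum {α : Type*} (h : ℕ → ℂ) (s : Finset α) (F : α → W d) :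
    Dscale h (∑ x ∈ s, F x) = ∑ x ∈ s, Dscale h (F x) := by
  funext m
  rw [W_sum_apply]
  show h (ydeg m) * (∑ x ∈ s, F x) m = _
  rw [W_sum_apply, Finset.mul_sum]
  rfl

lemma Dscale_smul (h : ℕ → ℂ) (c : ℂ) (f : W d) : Dscale h (c • f) = c • Dscale h f := by
  funext m
  show h (ydeg m) * (c * f m) = c * (h (ydeg m) * f m)
  ring

lemma Dscale_yy (ηinv : Fin d → Fin d → ℂ) (h : ℕ → ℂ) (f : W d) :
    Dscale h (yy ηinv * f) = yy ηinv * Dscale (fun k => h (k + 2)) f := by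
  rw [yy_mul, yy_mul, Dscale_sum]
  refine Finset.sum_congr rfl fun c _ => ?_
  rw [Dscale_sum]
  refine Finset.sum_congr rfl fun e _ => ?_
  rw [Dscale_smul, DscaleX, DscaleX]

lemma Dscale_pow_yy (ηinv : Fin d → Fin d → ℂ) (h : ℕ → ℂ) (j : ℕ) (f : W d) :
    Dscale h ((yy ηinv) ^ j * f) = (yy ηinv) ^ j * Dscale (fun k => h (k + 2 * j)) f := by
  induction j generalizing h with
  | zero => simp
  | succ n IH =>
    rw [pow_succ', mul_assoc, Dscale_yy, IH, mul_assoc]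
    have : (fun k => h (k + 2 * n + 2)) = (fun k => h (k + 2 * (n + 1))) := by
      funext k; ring_nf
    rw [this]

lemma Eop_eq_Dscale (f : W d) : Eop f = Dscale (fun k => (k : ℂ)) f := rfl

/-! ### projector lemmas -/

lemma proj_coeff (k : ℕ) (f : W d) (m : (Fin d ⊕ Unit) →₀ ℕ) :
    proj k f m = if ydeg m = k then f m else 0 := rfl

lemma proj_proj (k : ℕ) (f : W d) : proj k (proj k f) = proj k f := by
  funext m
  show (if ydeg m = k then proj k f m else 0) = proj k f m
  rw [proj_coeff]
  split_ifs <;> simp_all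

lemma proj_sum {α : Type*} (k : ℕ) (s : Finset α) (F : α → W d) :
    proj k (∑ x ∈ s, F x) = ∑ x ∈ s, proj k (F x) := by
  funext m
  rw [W_sum_apply]
  show (if ydeg m = k then (∑ x ∈ s, F x) m else 0) = ∑ x ∈ s, proj k (F x) m
  rw [W_sum_apply]
  split_ifs with h
  · exact Finset.sum_congr rfl fun x _ => by rw [proj_coeff, if_pos h]
  · exact (Finset.sum_eq_zero fun x _ => by rw [proj_coeff, if_neg h]).symm

lemma proj_add (k : ℕ) (f g : W d) : proj k (f + g) = proj k f + proj k g := by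
  funext m
  show (if ydeg m = k then f m + g m else 0)
      = (if ydeg m = k then f m else 0) + (if ydeg m = k then g m else 0)
  split_ifs <;> simp

lemma proj_smul (k : ℕ) (c : ℂ) (f : W d) : proj k (c • f) = c • proj k f := by
  funext m
  show (if ydeg m = k then c * f m else 0) = c * (if ydeg m = k then f m else 0)
  split_ifs <;> simp

lemma projX (k : ℕ) (a : Fin d) (f : W d) :
    (X (Sum.inl a) : W d) * proj k f = proj (k + 1) ((X (Sum.inl a) : W d) * f) := by
  funext m
  simp only [Xmul_coeff, proj_coeff]
  by_cases hm : m (Sum.inl a) = 0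
  · rw [if_pos hm, if_pos hm]
    split_ifs <;> rfl
  · rw [if_neg hm, if_neg hm, ydeg_sub_single_inl a m hm]
    have h1 : 1 ≤ ydeg m := le_trans (by omega) (coord_le_ydeg a m)
    have hiff : (ydeg m - 1 = k) ↔ (ydeg m = k + 1) := by omega
    simp only [hiff]

lemma projX0 (a : Fin d) (f : W d) : proj 0 ((X (Sum.inl a) : W d) * f) = 0 := by
  funext m
  rw [proj_coeff, Xmul_coeff]
  split_ifs with h1 h2
  · rfl
  · exfalso
    have := coord_le_ydeg a m
    omega
  · rfl

lemma proj_yy (ηinv : Fin d → Fin d → ℂ) (k : ℕ) (f : W d) :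
    yy ηinv * proj k f = proj (k + 2) (yy ηinv * f) := by
  rw [yy_mul, yy_mul, proj_sum]
  refine Finset.sum_congr rfl fun c _ => ?_
  rw [proj_sum]
  refine Finset.sum_congr rfl fun e _ => ?_
  rw [proj_smul, projX, projX]

lemma proj_yy0 (ηinv : Fin d → Fin d → ℂ) (f : W d) : proj 0 (yy ηinv * f) = 0 := by
  rw [yy_mul, proj_sum]
  refine Finset.sum_eq_zero fun c _ => ?_
  rw [proj_sum]
  refine Finset.sum_eq_zero fun e _ => ?_
  rw [proj_smul, projX0, smul_zero]

lemma proj_yy1 (ηinv : Fin d → Fin d → ℂ) (f : W d) : proj 1 (yy ηinv * f) = 0 := by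
  rw [yy_mul, proj_sum]
  refine Finset.sum_eq_zero fun c _ => ?_
  rw [proj_sum]
  refine Finset.sum_eq_zero fun e _ => ?_
  rw [proj_smul, show (1:ℕ) = 0 + 1 from rfl, ← projX, projX0, mul_zero, smul_zero]

lemma proj_pd (k : ℕ) (a : Fin d) (f : W d) :
    pd (Sum.inl a) (proj (k + 1) f) = proj k (pd (Sum.inl a) f) := by
  funext m
  simp only [pd_coeff, proj_coeff, ydeg_add_single_inl]
  have hiff : (ydeg m + 1 = k + 1) ↔ (ydeg m = k) := by omega
  simp only [hiff]
  split_ifs with h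
  · rfl
  · rw [mul_zero]

lemma proj_boxY (η : Fin d → Fin d → ℂ) (k : ℕ) (f : W d) :
    boxY η (proj (k + 2) f) = proj k (boxY η f) := by
  unfold boxY
  rw [proj_sum]
  refine Finset.sum_congr rfl fun a _ => ?_
  rw [proj_sum]
  refine Finset.sum_congr rfl fun b _ => ?_
  rw [proj_smul]
  congr 1
  rw [show k + 2 = (k + 1) + 1 from rfl, proj_pd, proj_pd]

lemma proj_Eop (k : ℕ) (f : W d) : proj k (Eop f) = (k : ℂ) • proj k f := by
  funext m
  show (if ydeg m = k then (ydeg m : ℂ) * f m else 0) = (k:ℂ) * (if ydeg m = k then f m else 0)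
  split_ifs with h
  · rw [h]
  · rw [mul_zero]

lemma Eop_of_proj (k : ℕ) (f : W d) (h : proj k f = f) : Eop f = (k : ℂ) • f := by
  conv_lhs => rw [← h]
  conv_rhs => rw [← h]
  rw [show Eop (proj k f) = proj k (Eop f) from ?_, proj_Eop]
  funext m
  show (ydeg m : ℂ) * (if ydeg m = k then f m else 0) = if ydeg m = k then (ydeg m : ℂ) * f m else 0
  split_ifs <;> simp

lemma proj_Dscale (h : ℕ → ℂ) (k : ℕ) (f : W d) :
    proj k (Dscale h f) = h k • proj k f := by
  funext m
  show (if ydeg m = k then h (ydeg m) * f m else 0) = h k * (if ydeg m = k then f m else 0)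
  split_ifs with hy
  · rw [hy]
  · rw [mul_zero]

lemma eq_zero_of_proj (f : W d) (h : ∀ k, proj k f = 0) : f = 0 := by
  funext m
  have := congrFun (h (ydeg m)) m
  rwa [proj_coeff, if_pos rfl] at this


/-! ### homogeneous uniqueness: `c θ + y·y Δθ = 0` forces `θ = 0` -/

section Unique

variable (η ηinv : Fin d → Fin d → ℂ)

lemma keyD (hd : 1 ≤ d)
    (hsymm : ∀ a b, η a b = η b a)
    (hinv : ∀ a c, (∑ b, η a b * ηinv b c) = if a = c then 1 else 0) :
    ∀ k : ℕ, ∀ c : ℕ, 0 < c → ∀ θ : W d, proj k θ = θ →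
      ((c:ℂ) • θ + yy ηinv * boxY η θ = 0) → θ = 0 := by
  intro k
  induction k using Nat.strong_induction_on with
  | _ k IH =>
    intro c hc θ hproj heq
    rcases lt_or_ge k 2 with hk | hk
    · -- low degree: Δθ = 0
      have hbox : boxY η θ = 0 := by
        funext m
        rw [boxY_coeff]
        show _ = (0:ℂ)
        refine Finset.sum_eq_zero fun a _ => Finset.sum_eq_zero fun b _ => ?_
        have hz : θ (m + Finsupp.single (Sum.inl a) 1 + Finsupp.single (Sum.inl b) 1) = 0 := by
          have h1 := congrFun hproj (m + Finsupp.single (Sum.inl a) 1 + Finsupp.single (Sum.inl b) 1)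
          rw [proj_coeff, ydeg_add_single_inl, ydeg_add_single_inl, if_neg (by omega)] at h1
          exact h1.symm
        rw [hz, mul_zero, mul_zero]
      rw [hbox, mul_zero, add_zero] at heq
      funext m
      have h2 := congrFun heq m
      show θ m = (0:ℂ)
      have h3 : ((c:ℕ):ℂ) ≠ 0 := Nat.cast_ne_zero.mpr (by omega)
      exact (mul_eq_zero.mp h2).resolve_left h3
    · obtain ⟨k', rfl⟩ : ∃ k', k = k' + 2 := ⟨k - 2, by omega⟩
      set g := boxY η θ with hg
      have heq2 := congrArg (boxY η) heq
      rw [boxY_add, boxY_smul, boxY_yy η ηinv hsymm hinv, boxY_zero, ← hg] at heq2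
      have hgproj : proj k' g = g := by
        rw [hg, ← proj_boxY, hproj]
      have hEop : Eop g = (k' : ℂ) • g := Eop_of_proj k' g hgproj
      rw [hEop] at heq2
      have hcomb : (c:ℂ) • g + (((2*d : ℕ) : ℂ) • g + (4:ℂ) • ((k':ℂ) • g)
          + yy ηinv * boxY η g) = ((c + 2*d + 4*k' : ℕ):ℂ) • g + yy ηinv * boxY η g := by
        push_cast
        module
      rw [hcomb] at heq2
      have hg0 : g = 0 := IH k' (by omega) (c + 2*d + 4*k') (by omega) g hgproj heq2
      rw [hg0, mul_zero, add_zero] at heq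
      funext m
      have h2 := congrFun heq m
      show θ m = (0:ℂ)
      have h3 : ((c:ℕ):ℂ) ≠ 0 := Nat.cast_ne_zero.mpr (by omega)
      exact (mul_eq_zero.mp h2).resolve_left h3

/-- If `Δ(y·y τ) = μ(E) (y·y τ)` then `τ = 0`. -/
lemma yUnique (hd : 1 ≤ d)
    (hsymm : ∀ a b, η a b = η b a)
    (hinv : ∀ a c, (∑ b, η a b * ηinv b c) = if a = c then 1 else 0)
    (μfun : ℕ → ℂ) (τ : W d)
    (heq : boxY η (yy ηinv * τ) = Dscale μfun (yy ηinv * τ)) : τ = 0 := by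
  apply eq_zero_of_proj
  intro k
  induction k using Nat.strong_induction_on with
  | _ k IH =>
    have hproj := congrArg (proj (k + 2)) heq
    rw [boxY_yy η ηinv hsymm hinv, proj_add, proj_add, proj_Dscale,
      show (k+2 : ℕ) = k + 2 from rfl] at hproj
    rw [show proj (k+2) (((2*d : ℕ):ℂ) • τ) = ((2*d:ℕ):ℂ) • proj (k+2) τ from proj_smul _ _ _,
      show proj (k+2) ((4:ℂ) • Eop τ) = (4:ℂ) • proj (k+2) (Eop τ) from proj_smul _ _ _,
      proj_Eop, ← proj_yy, ← proj_yy, ← proj_boxY] at hproj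
    -- hproj : 2d • proj_{k+2} τ + 4 • ((k+2) • proj_{k+2} τ) + yy * boxY (proj_{k+2} τ)
    --        = μ (k+2) • (yy * proj k τ)
    rcases Nat.lt_or_ge k 2 with hk | hk
    · -- for k = 0, 1 we directly prove proj k τ = 0 by projecting at level k
      have hp := congrArg (proj k) heq
      rw [boxY_yy η ηinv hsymm hinv, proj_add, proj_add, proj_Dscale] at hp
      rw [show proj k (((2*d : ℕ):ℂ) • τ) = ((2*d:ℕ):ℂ) • proj k τ from proj_smul _ _ _,
        show proj k ((4:ℂ) • Eop τ) = (4:ℂ) • proj k (Eop τ) from proj_smul _ _ _,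
        proj_Eop] at hp
      have hyy0 : ∀ f : W d, proj k (yy ηinv * f) = 0 := by
        intro f
        interval_cases k
        · exact proj_yy0 ηinv f
        · exact proj_yy1 ηinv f
      rw [hyy0, hyy0, smul_zero, add_zero] at hp
      -- hp : 2d • proj k τ + 4 • (k • proj k τ) = 0
      have hcomb : ((2*d : ℕ):ℂ) • proj k τ + (4:ℂ) • ((k:ℂ) • proj k τ)
          = ((2*d + 4*k : ℕ):ℂ) • proj k τ := by push_cast; module
      rw [hcomb] at hp
      funext m
      have h2 := congrFun hp m
      show proj k τ m = (0:ℂ)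
      have h3 : ((2*d + 4*k : ℕ):ℂ) ≠ 0 := Nat.cast_ne_zero.mpr (by omega)
      have h4 : ((2*d + 4*k : ℕ):ℂ) * proj k τ m = (0 : W d) m := h2
      exact (mul_eq_zero.mp h4).resolve_left h3
    · obtain ⟨k', rfl⟩ : ∃ k', k = k' + 2 := ⟨k - 2, by omega⟩
      -- use the equation at level k'+2... we need it at level k = k'+2, i.e. project heq at k'+2+... 
      -- use hproj at (k'); redo with k := k'
      have hproj' := congrArg (proj (k' + 2)) heq
      rw [boxY_yy η ηinv hsymm hinv, proj_add, proj_add, proj_Dscale] at hproj'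
      rw [show proj (k'+2) (((2*d : ℕ):ℂ) • τ) = ((2*d:ℕ):ℂ) • proj (k'+2) τ from proj_smul _ _ _,
        show proj (k'+2) ((4:ℂ) • Eop τ) = (4:ℂ) • proj (k'+2) (Eop τ) from proj_smul _ _ _,
        proj_Eop, ← proj_yy, ← proj_yy, ← proj_boxY] at hproj'
      rw [IH k' (by omega), mul_zero, smul_zero] at hproj'
      have hcomb : ((2*d : ℕ):ℂ) • proj (k'+2) τ + (4:ℂ) • (((k'+2:ℕ):ℂ) • proj (k'+2) τ)
          + yy ηinv * boxY η (proj (k'+2) τ)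
          = ((2*d + 4*(k'+2) : ℕ):ℂ) • proj (k'+2) τ + yy ηinv * boxY η (proj (k'+2) τ) := by
        push_cast; module
      rw [hcomb] at hproj'
      exact keyD η ηinv hd hsymm hinv (k'+2) (2*d + 4*(k'+2)) (by omega) (proj (k'+2) τ)
        (proj_proj _ _) hproj'

end Unique


/-! ### the z-direction -/

section ZDir

/-- abbreviation for the z unit vector -/
noncomputable def ez : (Fin d ⊕ Unit) →₀ ℕ := Finsupp.single (Sum.inr ()) 1

lemma zcoord_add_ez (m : (Fin d ⊕ Unit) →₀ ℕ) :
    (m + ez : (Fin d ⊕ Unit) →₀ ℕ) (Sum.inr ()) = m (Sum.inr ()) + 1 := by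
  rw [Finsupp.add_apply, ez, Finsupp.single_apply, if_pos rfl]

lemma ydeg_add_ez (m : (Fin d ⊕ Unit) →₀ ℕ) : ydeg (m + ez) = ydeg m :=
  ydeg_add_single_inr m

lemma erase_add_ez (m : (Fin d ⊕ Unit) →₀ ℕ) :
    Finsupp.erase (Sum.inr ()) (m + ez) = Finsupp.erase (Sum.inr ()) m := by
  ext j
  rcases j with a | u
  · rw [Finsupp.erase_ne (by simp), Finsupp.erase_ne (by simp), Finsupp.add_apply, ez,
      Finsupp.single_apply, if_neg (by simp), add_zero]
  · rcases u with ⟨⟩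
    rw [Finsupp.erase_same, Finsupp.erase_same]

lemma erase_add_inl (a : Fin d) (m : (Fin d ⊕ Unit) →₀ ℕ) :
    Finsupp.erase (Sum.inr ()) (m + Finsupp.single (Sum.inl a) 1)
      = Finsupp.erase (Sum.inr ()) m + Finsupp.single (Sum.inl a) 1 := by
  ext j
  rcases j with b | u
  · rw [Finsupp.erase_ne (by simp), Finsupp.add_apply, Finsupp.add_apply,
      Finsupp.erase_ne (by simp)]
  · rcases u with ⟨⟩
    rw [Finsupp.erase_same, Finsupp.add_apply, Finsupp.erase_same, Finsupp.single_apply,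
      if_neg (by simp), add_zero]

lemma erase_eq_self (m : (Fin d ⊕ Unit) →₀ ℕ) (h : m (Sum.inr ()) = 0) :
    Finsupp.erase (Sum.inr ()) m = m := by
  ext j
  rcases j with b | u
  · rw [Finsupp.erase_ne (by simp)]
  · rcases u with ⟨⟩
    rw [Finsupp.erase_same, h]

lemma ydeg_erase (m : (Fin d ⊕ Unit) →₀ ℕ) : ydeg (Finsupp.erase (Sum.inr ()) m) = ydeg m :=
  Finset.sum_congr rfl fun a _ => Finsupp.erase_ne (by simp)

lemma erase_coord_inl (a : Fin d) (m : (Fin d ⊕ Unit) →₀ ℕ) :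
    (Finsupp.erase (Sum.inr ()) m) (Sum.inl a) = m (Sum.inl a) :=
  Finsupp.erase_ne (by simp)

/-- the recursion coefficients -/
noncomputable def rr (k : ℕ) : ℕ → ℂ
  | 0 => 1
  | n+1 => (-((k:ℂ) + n)) / ((n:ℂ) + 1) * rr k n

lemma natc_ne (n : ℕ) : ((n:ℂ) + 1) ≠ 0 := by
  have : ((n:ℂ) + 1) = ((n + 1 : ℕ) : ℂ) := by push_cast; ring
  rw [this]
  exact Nat.cast_ne_zero.mpr (by omega)

lemma rr_rec (k n : ℕ) : ((n:ℂ) + 1) * rr k (n+1) = (-((k:ℂ) + n)) * rr k n := by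
  have hn : ((n:ℂ) + 1) ≠ 0 := natc_ne n
  rw [rr]
  field_simp

lemma rr_id (k n : ℕ) : ((n:ℂ) + 1) * ((n:ℂ) + 2) * rr k (n+2)
    = (k:ℂ) * ((k:ℂ) + 1) * rr (k+2) n := by
  induction n with
  | zero =>
    have A := rr_rec k 1
    have B := rr_rec k 0
    have C : rr k 0 = 1 := rfl
    have D : rr (k+2) 0 = 1 := rfl
    rw [C] at B
    rw [D]
    push_cast at A B ⊢
    norm_num at A B ⊢
    linear_combination A - ((k:ℂ) + 1) * B
  | succ n IH =>
    have hn1 : ((n:ℂ) + 1) ≠ 0 := natc_ne n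
    have hn3 : ((n:ℂ) + 2 + 1) ≠ 0 := by
      have h : ((n:ℂ) + 2 + 1) = (((n+2 : ℕ)):ℂ) + 1 := by push_cast; ring
      rw [h]
      exact natc_ne (n+2)
    have e1 : rr k (n+1+2) = (-((k:ℂ) + ((n+2 : ℕ) : ℂ))) / (((n+2 : ℕ):ℂ) + 1) * rr k (n+2) := by
      show rr k ((n+2)+1) = _
      rw [rr]
    have e2 : rr (k+2) (n+1) = (-(((k+2:ℕ)):ℂ) + -(n:ℂ)) / ((n:ℂ) + 1) * rr (k+2) n := by
      rw [rr]; ring_nf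
    rw [e1, e2]
    push_cast
    push_cast at IH
    field_simp
    linear_combination (((n:ℂ) + 2 + 1) * (-((k:ℂ) + (n:ℂ) + 2))) * IH

end ZDir


section Lift

/-- lift a z-independent series to the solution of `h φ = 0` -/
noncomputable def lift (ψ : W d) : W d :=
  fun m => rr (ydeg m) (m (Sum.inr ())) * ψ (Finsupp.erase (Sum.inr ()) m)

lemma lift_coeff (ψ : W d) (m : (Fin d ⊕ Unit) →₀ ℕ) :
    lift ψ m = rr (ydeg m) (m (Sum.inr ())) * ψ (Finsupp.erase (Sum.inr ()) m) := rfl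

lemma Xpd_diag' (i : Fin d ⊕ Unit) (f : W d) (m : (Fin d ⊕ Unit) →₀ ℕ) :
    ((X i : W d) * pd i f) m = (m i : ℂ) * f m := by
  rw [Xmul_coeff]
  by_cases hm : m i = 0
  · rw [if_pos hm, hm]; simp
  · rw [if_neg hm, pd_coeff, sub_add_single _ _ hm, Finsupp.tsub_apply, Finsupp.single_apply,
      if_pos rfl, Nat.cast_sub (by omega)]
    push_cast; ring

lemma hOp_coeff (f : W d) (m : (Fin d ⊕ Unit) →₀ ℕ) :
    hOp f m = -(((ydeg m : ℂ) + (m (Sum.inr ()) : ℂ)) * f m)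
      - ((m (Sum.inr ()) : ℂ) + 1) * f (m + ez) := by
  show (-(∑ a : Fin d, (X (Sum.inl a) : W d) * pd (Sum.inl a) f)
    - (pd (Sum.inr ()) f + (X (Sum.inr ()) : W d) * pd (Sum.inr ()) f)) m = _
  rw [W_sub_apply, W_neg_apply, W_add_apply, W_sum_apply,
    Finset.sum_congr rfl (fun a _ => Xpd_diag a f m), ← Finset.sum_mul, Xpd_diag',
    pd_coeff]
  have : ((∑ a : Fin d, (m (Sum.inl a) : ℂ))) = (ydeg m : ℂ) := by
    unfold ydeg; push_cast; ring
  rw [this, show (ez : (Fin d ⊕ Unit) →₀ ℕ) = Finsupp.single (Sum.inr ()) 1 from rfl]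
  ring

lemma lift_hOp (ψ : W d) : hOp (lift ψ) = 0 := by
  funext m
  rw [hOp_coeff]
  show _ = (0:ℂ)
  rw [lift_coeff, lift_coeff, ydeg_add_ez, zcoord_add_ez, erase_add_ez]
  push_cast
  linear_combination (-(ψ (Finsupp.erase (Sum.inr ()) m))) * rr_rec (ydeg m) (m (Sum.inr ()))

lemma lift_zRes (ψ : W d) (hZ : zRes ψ = ψ) : zRes (lift ψ) = ψ := by
  funext m
  show (if m (Sum.inr ()) = 0 then lift ψ m else 0) = ψ m
  conv_rhs => rw [← hZ]
  show _ = (if m (Sum.inr ()) = 0 then ψ m else 0)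
  by_cases h : m (Sum.inr ()) = 0
  · rw [if_pos h, if_pos h, lift_coeff, h, erase_eq_self m h]
    show 1 * ψ m = ψ m
    rw [one_mul]
  · rw [if_neg h, if_neg h]

lemma hOp_det (f : W d) (hf : hOp f = 0) : f = lift (zRes f) := by
  suffices H : ∀ n m, m (Sum.inr ()) = n → f m = lift (zRes f) m from
    funext fun m => H (m (Sum.inr ())) m rfl
  intro n
  induction n with
  | zero =>
    intro m hm
    rw [lift_coeff, hm, erase_eq_self m hm]
    show f m = 1 * zRes f m
    rw [one_mul]
    show f m = if m (Sum.inr ()) = 0 then f m else 0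
    rw [if_pos hm]
  | succ n IH =>
    intro m hm
    set m' := m - ez with hm'def
    have hmz : m (Sum.inr ()) ≠ 0 := by omega
    have hm'e : m' + ez = m := sub_add_single _ _ hmz
    have hm'z : m' (Sum.inr ()) = n := by
      rw [hm'def]
      show m (Sum.inr ()) - (Finsupp.single (Sum.inr ()) 1 : (Fin d ⊕ Unit) →₀ ℕ) (Sum.inr ()) = n
      rw [Finsupp.single_apply, if_pos rfl]
      omega
    have hydeg : ydeg m' = ydeg m := by
      conv_rhs => rw [← hm'e]
      rw [ydeg_add_ez]
    have herase : Finsupp.erase (Sum.inr ()) m' = Finsupp.erase (Sum.inr ()) m := by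
      conv_rhs => rw [← hm'e, erase_add_ez]
    have hrec := congrFun hf m'
    rw [hOp_coeff] at hrec
    have hrec' : -(((ydeg m' : ℂ) + (m' (Sum.inr ()) : ℂ)) * f m')
        - ((m' (Sum.inr ()) : ℂ) + 1) * f (m' + ez) = 0 := hrec
    rw [hm'e, hm'z, IH m' hm'z, lift_coeff, hm'z, hydeg, herase] at hrec'
    rw [lift_coeff, hm]
    have hcn : ((n:ℂ) + 1) ≠ 0 := natc_ne n
    have hr := rr_rec (ydeg m) n
    set A := zRes f (Finsupp.erase (Sum.inr ()) m)
    -- hrec' : -((ydeg m + n) * (rr (ydeg m) n * A)) - (n+1) * f m = 0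
    -- goal : f m = rr (ydeg m) (n+1) * A
    have : ((n:ℂ) + 1) * f m = ((n:ℂ)+1) * (rr (ydeg m) (n+1) * A) := by
      push_cast at hrec' ⊢
      linear_combination (-1 : ℂ) * hrec' - A * hr
    have := mul_left_cancel₀ hcn this
    push_cast at this ⊢
    exact this

end Lift


section Transfer

variable (η : Fin d → Fin d → ℂ) (l : ℝ)

/-- the eigenvalue function `μ k = k(k+1)/l²` -/
noncomputable def μl (l : ℝ) : ℕ → ℂ := fun k => ((l:ℂ)^2)⁻¹ * ((k:ℂ) * ((k:ℂ) + 1))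

lemma boxOp_coeff (f : W d) (m : (Fin d ⊕ Unit) →₀ ℕ) :
    boxOp η l f m = boxY η f m - ((l:ℂ)^2)⁻¹ * (((m (Sum.inr ()) : ℂ) + 1) *
      ((((m + ez : (Fin d ⊕ Unit) →₀ ℕ) (Sum.inr ()) : ℕ) : ℂ) + 1) * f (m + ez + ez)) := by
  show boxY η f m - ((l:ℂ)^2)⁻¹ * pd (Sum.inr ()) (pd (Sum.inr ()) f) m = _
  rw [pd_coeff, pd_coeff, show (ez : (Fin d ⊕ Unit) →₀ ℕ) = Finsupp.single (Sum.inr ()) 1 from rfl]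
  ring

lemma zRes_zfree (f : W d) (m : (Fin d ⊕ Unit) →₀ ℕ) (h : m (Sum.inr ()) ≠ 0) :
    zRes f m = 0 := by
  show (if m (Sum.inr ()) = 0 then f m else 0) = 0
  rw [if_neg h]

lemma zRes_idem (f : W d) : zRes (zRes f) = zRes f := by
  funext m
  show (if m (Sum.inr ()) = 0 then zRes f m else 0) = zRes f m
  by_cases h : m (Sum.inr ()) = 0
  · rw [if_pos h]
  · rw [if_neg h, zRes_zfree f m h]

lemma good_of_sol (f : W d) (hf : hOp f = 0) (hbox : boxOp η l f = 0) :
    boxY η (zRes f) = Dscale (μl l) (zRes f) := by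
  have hlift : f = lift (zRes f) := hOp_det f hf
  funext m
  show boxY η (zRes f) m = μl l (ydeg m) * zRes f m
  by_cases hz : m (Sum.inr ()) = 0
  · -- evaluate the box equation at m
    have hb := congrFun hbox m
    rw [boxOp_coeff] at hb
    have hb' : boxY η f m - ((l:ℂ)^2)⁻¹ * (((m (Sum.inr ()) : ℂ) + 1) *
        ((((m + ez : (Fin d ⊕ Unit) →₀ ℕ) (Sum.inr ()) : ℕ) : ℂ) + 1) * f (m + ez + ez)) = 0 := hb
    have hbb : boxY η f m = boxY η (zRes f) m := by
      rw [boxY_coeff, boxY_coeff]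
      refine Finset.sum_congr rfl fun a _ => Finset.sum_congr rfl fun b _ => ?_
      have hzc : (m + Finsupp.single (Sum.inl a) 1 + Finsupp.single (Sum.inl b) 1 :
          (Fin d ⊕ Unit) →₀ ℕ) (Sum.inr ()) = 0 := by
        rw [zcoord_add_single_inl, zcoord_add_single_inl]; exact hz
      have : f (m + Finsupp.single (Sum.inl a) 1 + Finsupp.single (Sum.inl b) 1)
          = zRes f (m + Finsupp.single (Sum.inl a) 1 + Finsupp.single (Sum.inl b) 1) := by
        show _ = if _ = 0 then _ else _
        rw [if_pos hzc]
      rw [this]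
    have hf2 : f (m + ez + ez) = rr (ydeg m) 2 * zRes f m := by
      conv_lhs => rw [hlift]
      rw [lift_coeff, ydeg_add_ez, ydeg_add_ez, zcoord_add_ez, zcoord_add_ez, hz,
        erase_add_ez, erase_add_ez, erase_eq_self m hz]
    rw [hbb, hf2, hz, zcoord_add_ez, hz] at hb'
    -- now conclude using rr values
    have hA := rr_rec (ydeg m) 1
    have hB := rr_rec (ydeg m) 0
    have hC : rr (ydeg m) 0 = 1 := rfl
    rw [hC] at hB
    show _ = ((l:ℂ)^2)⁻¹ * ((ydeg m : ℂ) * ((ydeg m : ℂ) + 1)) * zRes f m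
    push_cast at hb' hA hB ⊢
    norm_num at hb' hA hB ⊢
    linear_combination hb' + ((l:ℂ)^2)⁻¹ * zRes f m * hA - ((l:ℂ)^2)⁻¹ * zRes f m *
      (((ydeg m : ℂ)) + 1) * hB
  · rw [zRes_zfree f m hz, mul_zero]
    rw [boxY_coeff]
    refine Finset.sum_eq_zero fun a _ => Finset.sum_eq_zero fun b _ => ?_
    have hzc : (m + Finsupp.single (Sum.inl a) 1 + Finsupp.single (Sum.inl b) 1 :
        (Fin d ⊕ Unit) →₀ ℕ) (Sum.inr ()) ≠ 0 := by
      rw [zcoord_add_single_inl, zcoord_add_single_inl]; exact hz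
    rw [zRes_zfree f _ hzc, mul_zero, mul_zero]

lemma sol_of_good (ψ : W d) (hgood : boxY η ψ = Dscale (μl l) ψ) :
    boxOp η l (lift ψ) = 0 := by
  funext m
  rw [boxOp_coeff]
  show _ = (0:ℂ)
  set k := ydeg m with hk
  set n := m (Sum.inr ()) with hn
  have h1 : boxY η (lift ψ) m = rr (k + 2) n * boxY η ψ (Finsupp.erase (Sum.inr ()) m) := by
    rw [boxY_coeff, boxY_coeff, Finset.mul_sum]
    refine Finset.sum_congr rfl fun a _ => ?_
    rw [Finset.mul_sum]
    refine Finset.sum_congr rfl fun b _ => ?_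
    have hl : lift ψ (m + Finsupp.single (Sum.inl a) 1 + Finsupp.single (Sum.inl b) 1)
        = rr (k + 2) n * ψ (Finsupp.erase (Sum.inr ()) m + Finsupp.single (Sum.inl a) 1
            + Finsupp.single (Sum.inl b) 1) := by
      rw [lift_coeff, ydeg_add_single_inl, ydeg_add_single_inl, zcoord_add_single_inl,
        zcoord_add_single_inl, erase_add_inl, erase_add_inl, ← hk, ← hn]
    have hc1 : ((m + Finsupp.single (Sum.inl a) 1 : (Fin d ⊕ Unit) →₀ ℕ) (Sum.inl b))
        = ((Finsupp.erase (Sum.inr ()) m + Finsupp.single (Sum.inl a) 1 :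
            (Fin d ⊕ Unit) →₀ ℕ) (Sum.inl b)) := by
      rw [Finsupp.add_apply, Finsupp.add_apply, erase_coord_inl]
    rw [hl, erase_coord_inl, ← hc1]
    ring
  have h2 : lift ψ (m + ez + ez) = rr k (n + 2) * ψ (Finsupp.erase (Sum.inr ()) m) := by
    rw [lift_coeff, ydeg_add_ez, ydeg_add_ez, zcoord_add_ez, zcoord_add_ez, erase_add_ez,
      erase_add_ez, ← hk, ← hn]
  have h3 : boxY η ψ (Finsupp.erase (Sum.inr ()) m)
      = μl l k * ψ (Finsupp.erase (Sum.inr ()) m) := by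
    have h3' := congrFun hgood (Finsupp.erase (Sum.inr ()) m)
    rw [h3']
    show μl l (ydeg (Finsupp.erase (Sum.inr ()) m)) * _ = _
    rw [ydeg_erase, ← hk]
  rw [h1, h3, h2, zcoord_add_ez, ← hn]
  simp only [μl]
  push_cast
  linear_combination (-(((l:ℂ)^2)⁻¹ * ψ (Finsupp.erase (Sum.inr ()) m))) * rr_id k n

end Transfer


section Exist

variable (η ηinv : Fin d → Fin d → ℂ)

lemma ordX (a : Fin d) (f : W d) (n : ℕ) (h : ∀ m', ydeg m' < n → f m' = 0) :
    ∀ m, ydeg m < n + 1 → ((X (Sum.inl a) : W d) * f) m = 0 := by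
  intro m hm
  rw [Xmul_coeff]
  split_ifs with h0
  · rfl
  · apply h
    rw [ydeg_sub_single_inl a m h0]
    have := coord_le_ydeg a m
    omega

lemma ordyy (f : W d) (n : ℕ) (h : ∀ m', ydeg m' < n → f m' = 0) :
    ∀ m, ydeg m < n + 2 → (yy ηinv * f) m = 0 := by
  intro m hm
  rw [yy_mul, W_sum_apply]
  refine Finset.sum_eq_zero fun c _ => ?_
  rw [W_sum_apply]
  refine Finset.sum_eq_zero fun e _ => ?_
  rw [W_smul_apply, smul_eq_mul]
  rw [ordX c _ (n+1) (fun m' hm' => ordX e f n h m' hm') m (by omega), mul_zero]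

lemma ordpow (j : ℕ) (f : W d) : ∀ m, ydeg m < 2 * j → ((yy ηinv) ^ j * f) m = 0 := by
  induction j generalizing f with
  | zero => intro m hm; omega
  | succ n IH =>
    intro m hm
    have hp : (yy ηinv) ^ (n+1) * f = yy ηinv * ((yy ηinv) ^ n * f) := by
      rw [pow_succ', mul_assoc]
    rw [hp]
    exact ordyy ηinv _ (2*n) (fun m' hm' => IH f m' hm') m (by omega)

lemma Xcongr (a : Fin d) (f g : W d) (n : ℕ) (h : ∀ m', ydeg m' < n → f m' = g m') :
    ∀ m, ydeg m < n + 1 → ((X (Sum.inl a) : W d) * f) m = ((X (Sum.inl a) : W d) * g) m := by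
  intro m hm
  rw [Xmul_coeff, Xmul_coeff]
  split_ifs with h0
  · rfl
  · apply h
    rw [ydeg_sub_single_inl a m h0]
    have := coord_le_ydeg a m
    omega

lemma yyCongr (f g : W d) (n : ℕ) (h : ∀ m', ydeg m' < n → f m' = g m') :
    ∀ m, ydeg m < n + 2 → (yy ηinv * f) m = (yy ηinv * g) m := by
  intro m hm
  rw [yy_mul, yy_mul, W_sum_apply, W_sum_apply]
  refine Finset.sum_congr rfl fun c _ => ?_
  rw [W_sum_apply, W_sum_apply]
  refine Finset.sum_congr rfl fun e _ => ?_
  rw [W_smul_apply, W_smul_apply, smul_eq_mul, smul_eq_mul]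
  rw [Xcongr c _ _ (n+1) (fun m' hm' => Xcongr e f g n h m' hm') m (by omega)]

lemma zfreeX (a : Fin d) (f : W d) (hf : ∀ m, m (Sum.inr ()) ≠ 0 → f m = 0) :
    ∀ m, m (Sum.inr ()) ≠ 0 → ((X (Sum.inl a) : W d) * f) m = 0 := by
  intro m hm
  rw [Xmul_coeff]
  split_ifs with h0
  · rfl
  · exact hf _ (by rw [zcoord_sub_single_inl]; exact hm)

lemma zfreeyy (f : W d) (hf : ∀ m, m (Sum.inr ()) ≠ 0 → f m = 0) :
    ∀ m, m (Sum.inr ()) ≠ 0 → (yy ηinv * f) m = 0 := by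
  intro m hm
  rw [yy_mul, W_sum_apply]
  refine Finset.sum_eq_zero fun c _ => ?_
  rw [W_sum_apply]
  refine Finset.sum_eq_zero fun e _ => ?_
  rw [W_smul_apply, smul_eq_mul, zfreeX c _ (zfreeX e f hf) m hm, mul_zero]

lemma zfreepow (j : ℕ) (f : W d) (hf : ∀ m, m (Sum.inr ()) ≠ 0 → f m = 0) :
    ∀ m, m (Sum.inr ()) ≠ 0 → ((yy ηinv) ^ j * f) m = 0 := by
  induction j generalizing f with
  | zero =>
    intro m hm
    rw [pow_zero, one_mul]
    exact hf m hm
  | succ n IH =>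
    intro m hm
    have hp : (yy ηinv) ^ (n+1) * f = yy ηinv * ((yy ηinv) ^ n * f) := by
      rw [pow_succ', mul_assoc]
    rw [hp]
    exact zfreeyy ηinv _ (IH f hf) m hm

lemma boxY_sum {α : Type*} (s : Finset α) (F : α → W d) :
    boxY η (∑ x ∈ s, F x) = ∑ x ∈ s, boxY η (F x) := by
  classical
  induction s using Finset.induction_on with
  | empty =>
    rw [Finset.sum_empty, Finset.sum_empty, boxY_zero]
  | insert _ _ hx IH =>
    rw [Finset.sum_insert hx, Finset.sum_insert hx, boxY_add, IH]

lemma boxY_pow_yy (hsymm : ∀ a b, η a b = η b a)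
    (hinv : ∀ a c, (∑ b, η a b * ηinv b c) = if a = c then 1 else 0) (j : ℕ) (f : W d) :
    boxY η ((yy ηinv) ^ (j+1) * f)
      = (yy ηinv) ^ (j+1) * boxY η f
        + (((j+1) * (2*d + 4*j) : ℕ) : ℂ) • ((yy ηinv) ^ j * f)
        + ((4*(j+1) : ℕ) : ℂ) • ((yy ηinv) ^ j * Eop f) := by
  have hma : ∀ (g : W d) (i : ℕ), yy ηinv * ((yy ηinv) ^ i * g) = (yy ηinv) ^ (i+1) * g :=
    fun g i => by rw [← mul_assoc, ← pow_succ']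
  induction j with
  | zero =>
    simp only [zero_add, pow_one, pow_zero, one_mul]
    rw [boxY_yy η ηinv hsymm hinv]
    push_cast
    module
  | succ n IH =>
    have hp : (yy ηinv) ^ (n+1+1) * f = yy ηinv * ((yy ηinv) ^ (n+1) * f) := (hma f (n+1)).symm
    rw [hp, boxY_yy η ηinv hsymm hinv, IH]
    have hE : Eop ((yy ηinv) ^ (n+1) * f)
        = (yy ηinv) ^ (n+1) * Eop f + ((2*(n+1) : ℕ) : ℂ) • ((yy ηinv) ^ (n+1) * f) := by
      rw [Eop_eq_Dscale, Dscale_pow_yy]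
      have hh : Dscale (fun k => ((k + 2*(n+1) : ℕ) : ℂ)) f
          = Dscale (fun k => (k:ℂ)) f + ((2*(n+1) : ℕ) : ℂ) • f := by
        funext m
        show ((ydeg m + 2*(n+1) : ℕ) : ℂ) * f m
          = (ydeg m : ℂ) * f m + ((2*(n+1) : ℕ) : ℂ) * f m
        push_cast
        ring
      rw [hh, mul_add, mul_smul_comm, ← Eop_eq_Dscale]
    rw [hE]
    simp only [mul_add, mul_smul_comm, hma]
    push_cast
    module

end Exist


/-! ### the solution series -/

noncomputable def fseq (l : ℝ) (dd : ℕ) : ℕ → ℕ → ℂ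
  | 0 => fun _ => 1
  | (j+1) => fun k =>
      μl l (k + 2*j) * fseq l dd j k / (((2*(j+1)*(dd + 2*j + 2*k)) : ℕ) : ℂ)

noncomputable def Tj (ηinv : Fin d → Fin d → ℂ) (l : ℝ) (φ₀ : W d) (j : ℕ) : W d :=
  (yy ηinv)^j * Dscale (fseq l d j) φ₀

noncomputable def SN (ηinv : Fin d → Fin d → ℂ) (l : ℝ) (φ₀ : W d) (N : ℕ) : W d :=
  ∑ j ∈ Finset.range N, Tj ηinv l φ₀ j

noncomputable def UU (ηinv : Fin d → Fin d → ℂ) (l : ℝ) (φ₀ : W d) (j : ℕ) : W d :=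
  (yy ηinv)^j * Dscale (fseq l d (j+1)) φ₀

noncomputable def SU (ηinv : Fin d → Fin d → ℂ) (l : ℝ) (φ₀ : W d) (N : ℕ) : W d :=
  ∑ j ∈ Finset.range N, UU ηinv l φ₀ j

noncomputable def ψsol (ηinv : Fin d → Fin d → ℂ) (l : ℝ) (φ₀ : W d) : W d :=
  fun m => SN ηinv l φ₀ (ydeg m / 2 + 1) m

noncomputable def ψ1sol (ηinv : Fin d → Fin d → ℂ) (l : ℝ) (φ₀ : W d) : W d :=
  fun m => SU ηinv l φ₀ (ydeg m / 2 + 1) m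

section Solution

variable (η ηinv : Fin d → Fin d → ℂ) (l : ℝ) (φ₀ : W d)

lemma Dscale_comp (h h' : ℕ → ℂ) (f : W d) :
    Dscale h (Dscale h' f) = Dscale (fun k => h k * h' k) f := by
  funext m
  show h _ * (h' _ * f m) = (h _ * h' _) * f m
  ring

lemma Dscale_zero (h : ℕ → ℂ) : Dscale h (0 : W d) = 0 := by
  funext m
  show h _ * (0:ℂ) = (0:ℂ)
  ring

lemma Dscale_one (f : W d) : Dscale (fun _ => (1:ℂ)) f = f := by
  funext m
  show (1:ℂ) * f m = f m
  ring

lemma Dscale_combine (c1 c2 : ℂ) (h h' : ℕ → ℂ) (f : W d) :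
    c1 • Dscale h f + c2 • Dscale h' f = Dscale (fun k => c1 * h k + c2 * h' k) f := by
  funext m
  show c1 * (h _ * f m) + c2 * (h' _ * f m) = (c1 * h _ + c2 * h' _) * f m
  ring

lemma T0_eq : Tj ηinv l φ₀ 0 = φ₀ := by
  unfold Tj
  rw [pow_zero, one_mul]
  have : fseq l d 0 = fun _ => (1:ℂ) := rfl
  rw [this, Dscale_one]

variable (hd : 1 ≤ d)
variable (hsymm : ∀ a b, η a b = η b a)
variable (hinv : ∀ a c, (∑ b, η a b * ηinv b c) = if a = c then 1 else 0)
variable (hharm : boxY η φ₀ = 0)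

include hd hsymm hinv hharm in
lemma key_rec (j : ℕ) :
    boxY η (Tj ηinv l φ₀ (j+1)) = Dscale (μl l) (Tj ηinv l φ₀ j) := by
  unfold Tj
  rw [boxY_pow_yy η ηinv hsymm hinv, Dscale_boxY, hharm, Dscale_zero, mul_zero, zero_add]
  have hEop : Eop (Dscale (fseq l d (j+1)) φ₀)
      = Dscale (fun k => (k:ℂ) * fseq l d (j+1) k) φ₀ := by
    funext m
    show (ydeg m : ℂ) * (fseq l d (j+1) (ydeg m) * φ₀ m)
      = ((ydeg m : ℂ) * fseq l d (j+1) (ydeg m)) * φ₀ m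
    ring
  rw [hEop, Dscale_pow_yy, Dscale_comp, ← mul_smul_comm, ← mul_smul_comm, ← mul_add,
    Dscale_combine]
  have hfun : ∀ H1 H2 : ℕ → ℂ, H1 = H2 → Dscale H1 φ₀ = Dscale H2 φ₀ := fun _ _ h => by rw [h]
  congr 1
  refine hfun _ _ ?_
  funext k
  have hDnat : (2*(j+1)) * (d + 2*j + 2*k) ≠ 0 := Nat.mul_ne_zero (by omega) (by omega)
  have hD : (((2*(j+1)*(d + 2*j + 2*k)) : ℕ) : ℂ) ≠ 0 := Nat.cast_ne_zero.mpr hDnat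
  have hfs : fseq l d (j+1) k
      = μl l (k + 2*j) * fseq l d j k / (((2*(j+1)*(d + 2*j + 2*k)) : ℕ) : ℂ) := rfl
  have hfs' : (((2*(j+1)*(d + 2*j + 2*k)) : ℕ) : ℂ) * fseq l d (j+1) k
      = μl l (k + 2*j) * fseq l d j k := by
    rw [hfs]
    field_simp
  push_cast at hfs' ⊢
  linear_combination hfs' 

lemma Tj_vanish (j : ℕ) (m : (Fin d ⊕ Unit) →₀ ℕ) (h : ydeg m < 2*j) :
    Tj ηinv l φ₀ j m = 0 :=
  ordpow ηinv j _ m h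

lemma UU_vanish (j : ℕ) (m : (Fin d ⊕ Unit) →₀ ℕ) (h : ydeg m < 2*j) :
    UU ηinv l φ₀ j m = 0 :=
  ordpow ηinv j _ m h

lemma SN_stab (N : ℕ) (m : (Fin d ⊕ Unit) →₀ ℕ) (h : ydeg m / 2 + 1 ≤ N) :
    SN ηinv l φ₀ N m = ψsol ηinv l φ₀ m := by
  show SN ηinv l φ₀ N m = SN ηinv l φ₀ (ydeg m / 2 + 1) m
  unfold SN
  rw [W_sum_apply, W_sum_apply]
  refine (Finset.sum_subset (Finset.range_subset_range.mpr h) ?_).symm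
  intro j hj hj'
  rw [Finset.mem_range] at hj hj'
  exact Tj_vanish ηinv l φ₀ j m (by omega)

lemma SU_stab (N : ℕ) (m : (Fin d ⊕ Unit) →₀ ℕ) (h : ydeg m / 2 + 1 ≤ N) :
    SU ηinv l φ₀ N m = ψ1sol ηinv l φ₀ m := by
  show SU ηinv l φ₀ N m = SU ηinv l φ₀ (ydeg m / 2 + 1) m
  unfold SU
  rw [W_sum_apply, W_sum_apply]
  refine (Finset.sum_subset (Finset.range_subset_range.mpr h) ?_).symm
  intro j hj hj'
  rw [Finset.mem_range] at hj hj'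
  exact UU_vanish ηinv l φ₀ j m (by omega)

include hd hsymm hinv hharm in
lemma telescope (N : ℕ) :
    boxY η (SN ηinv l φ₀ (N+1)) = Dscale (μl l) (SN ηinv l φ₀ N) := by
  unfold SN
  rw [boxY_sum, Finset.sum_range_succ' (fun j => boxY η (Tj ηinv l φ₀ j)) N]
  rw [T0_eq, hharm, add_zero]
  rw [Finset.sum_congr rfl (fun j _ => key_rec η ηinv l φ₀ hd hsymm hinv hharm j)]
  rw [← Dscale_sum]

include hd hsymm hinv hharm in
lemma good_psisol :
    boxY η (ψsol ηinv l φ₀) = Dscale (μl l) (ψsol ηinv l φ₀) := by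
  funext m
  set k := ydeg m with hk
  set N := k/2 + 1 with hN
  have h1 : boxY η (ψsol ηinv l φ₀) m = boxY η (SN ηinv l φ₀ (N+1)) m := by
    rw [boxY_coeff, boxY_coeff]
    refine Finset.sum_congr rfl fun a _ => Finset.sum_congr rfl fun b _ => ?_
    have hyd : ydeg (m + Finsupp.single (Sum.inl a) 1 + Finsupp.single (Sum.inl b) 1) = k + 2 := by
      rw [ydeg_add_single_inl, ydeg_add_single_inl]
    have := SN_stab ηinv l φ₀ (N+1) (m + Finsupp.single (Sum.inl a) 1 + Finsupp.single (Sum.inl b) 1)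
      (by rw [hyd]; omega)
    rw [this]
  rw [h1, congrFun (telescope η ηinv l φ₀ hd hsymm hinv hharm N) m]
  show μl l k * SN ηinv l φ₀ N m = μl l k * ψsol ηinv l φ₀ m
  rw [SN_stab ηinv l φ₀ N m (by omega)]

variable (hz : zRes φ₀ = φ₀)

include hz in
lemma zfree_phi0 : ∀ m : (Fin d ⊕ Unit) →₀ ℕ, m (Sum.inr ()) ≠ 0 → φ₀ m = 0 := by
  intro m hm
  rw [← hz]
  exact zRes_zfree φ₀ m hm

include hz in
lemma zfree_Tj (j : ℕ) : ∀ m : (Fin d ⊕ Unit) →₀ ℕ, m (Sum.inr ()) ≠ 0 → Tj ηinv l φ₀ j m = 0 := by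
  intro m hm
  refine zfreepow ηinv j _ ?_ m hm
  intro m' hm'
  show fseq l d j (ydeg m') * φ₀ m' = 0
  rw [zfree_phi0 φ₀ hz m' hm', mul_zero]

include hz in
lemma zfree_UU (j : ℕ) : ∀ m : (Fin d ⊕ Unit) →₀ ℕ, m (Sum.inr ()) ≠ 0 → UU ηinv l φ₀ j m = 0 := by
  intro m hm
  refine zfreepow ηinv j _ ?_ m hm
  intro m' hm'
  show fseq l d (j+1) (ydeg m') * φ₀ m' = 0
  rw [zfree_phi0 φ₀ hz m' hm', mul_zero]

include hz in
lemma zres_psisol : zRes (ψsol ηinv l φ₀) = ψsol ηinv l φ₀ := by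
  funext m
  show (if m (Sum.inr ()) = 0 then ψsol ηinv l φ₀ m else 0) = ψsol ηinv l φ₀ m
  by_cases h : m (Sum.inr ()) = 0
  · rw [if_pos h]
  · rw [if_neg h]
    show (0:ℂ) = SN ηinv l φ₀ (ydeg m / 2 + 1) m
    unfold SN
    rw [W_sum_apply]
    exact (Finset.sum_eq_zero fun j _ => zfree_Tj ηinv l φ₀ hz j m h).symm

include hz in
lemma zres_psi1sol : zRes (ψ1sol ηinv l φ₀) = ψ1sol ηinv l φ₀ := by
  funext m
  show (if m (Sum.inr ()) = 0 then ψ1sol ηinv l φ₀ m else 0) = ψ1sol ηinv l φ₀ m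
  by_cases h : m (Sum.inr ()) = 0
  · rw [if_pos h]
  · rw [if_neg h]
    show (0:ℂ) = SU ηinv l φ₀ (ydeg m / 2 + 1) m
    unfold SU
    rw [W_sum_apply]
    exact (Finset.sum_eq_zero fun j _ => zfree_UU ηinv l φ₀ hz j m h).symm

lemma decomp : ψsol ηinv l φ₀ = φ₀ + yy ηinv * ψ1sol ηinv l φ₀ := by
  funext m
  set k := ydeg m with hk
  set N := k/2 + 1 with hN
  show ψsol ηinv l φ₀ m = φ₀ m + (yy ηinv * ψ1sol ηinv l φ₀) m
  have hyy : (yy ηinv * ψ1sol ηinv l φ₀) m = (yy ηinv * SU ηinv l φ₀ N) m := by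
    refine yyCongr ηinv _ _ k ?_ m (by omega)
    intro m' hm'
    exact (SU_stab ηinv l φ₀ N m' (by omega : ydeg m' / 2 + 1 ≤ N)).symm
  have hySU : yy ηinv * SU ηinv l φ₀ N = SN ηinv l φ₀ (N+1) - φ₀ := by
    unfold SU SN
    rw [Finset.mul_sum]
    have hUT : ∀ j, yy ηinv * UU ηinv l φ₀ j = Tj ηinv l φ₀ (j+1) := by
      intro j
      unfold UU Tj
      rw [← mul_assoc, ← pow_succ']
    rw [Finset.sum_congr rfl (fun j _ => hUT j)]
    rw [Finset.sum_range_succ' (fun j => Tj ηinv l φ₀ j) N, T0_eq]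
    rw [add_sub_cancel_right]
  rw [hyy, hySU]
  show _ = φ₀ m + (SN ηinv l φ₀ (N+1) m - φ₀ m)
  rw [SN_stab ηinv l φ₀ (N+1) m (by omega)]
  ring

end Solution


lemma boxY_sub (η : Fin d → Fin d → ℂ) (f g : W d) :
    boxY η (f - g) = boxY η f - boxY η g := by
  have h : f - g = f + (-1:ℂ) • g := by
    funext m
    show f m - g m = f m + (-1) * g m
    ring
  rw [h, boxY_add, boxY_smul]
  module

lemma Dscale_sub (h : ℕ → ℂ) (f g : W d) :
    Dscale h (f - g) = Dscale h f - Dscale h g := by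
  funext m
  show h _ * (f m - g m) = h _ * f m - h _ * g m
  ring

end HSlift

open HSlift in
/-- For every `z`-independent harmonic `φ₀` (`Σ η^{ab}∂²_{y^a y^b} φ₀ = 0`)
there is a unique `φ ∈ ℂ[[y,z]]` with `h φ = 0`, `□ φ = 0`, and whose
`z`-independent part has traceless component equal to `φ₀`, i.e.
`φ|_{z=0} = φ₀ + (η_{ab}y^ay^b)·ψ₁` for some `z`-independent `ψ₁`. -/
theorem unique_harmonic_lift_scalar
    (d : ℕ) (hd : 1 ≤ d) (l : ℝ) (hl : l ≠ 0)
    (η ηinv : Fin d → Fin d → ℂ)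
    (hsymm : ∀ a b, η a b = η b a)
    (hinv : ∀ a c, (∑ b, η a b * ηinv b c) = if a = c then 1 else 0)
    (φ₀ : W d) (hz : zRes φ₀ = φ₀) (hharm : boxY η φ₀ = 0) :
    ∃! φ : W d, hOp φ = 0 ∧ boxOp η l φ = 0 ∧
      ∃ ψ₁ : W d, zRes ψ₁ = ψ₁ ∧ zRes φ = φ₀ + yy ηinv * ψ₁ := by
  have hzψ : zRes (ψsol ηinv l φ₀) = ψsol ηinv l φ₀ := zres_psisol ηinv l φ₀ hz
  have hgood : boxY η (ψsol ηinv l φ₀) = Dscale (μl l) (ψsol ηinv l φ₀) :=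
    good_psisol η ηinv l φ₀ hd hsymm hinv hharm
  refine ⟨lift (ψsol ηinv l φ₀), ⟨lift_hOp _, sol_of_good η l _ hgood,
    ψ1sol ηinv l φ₀, zres_psi1sol ηinv l φ₀ hz, ?_⟩, ?_⟩
  · rw [lift_zRes _ hzψ]
    exact decomp ηinv l φ₀
  · rintro φ' ⟨hφ'h, hφ'box, ψ₁', hψ₁'z, hφ'res⟩
    have hres : zRes φ' = ψsol ηinv l φ₀ := by
      have hgood' : boxY η (zRes φ') = Dscale (μl l) (zRes φ') :=
        good_of_sol η l φ' hφ'h hφ'box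
      have hσ : zRes φ' - ψsol ηinv l φ₀ = yy ηinv * (ψ₁' - ψ1sol ηinv l φ₀) := by
        calc zRes φ' - ψsol ηinv l φ₀
            = (φ₀ + yy ηinv * ψ₁') - (φ₀ + yy ηinv * ψ1sol ηinv l φ₀) := by
              rw [hφ'res, decomp ηinv l φ₀]
        _ = yy ηinv * (ψ₁' - ψ1sol ηinv l φ₀) := by ring
      have heq : boxY η (yy ηinv * (ψ₁' - ψ1sol ηinv l φ₀))
          = Dscale (μl l) (yy ηinv * (ψ₁' - ψ1sol ηinv l φ₀)) := by
        rw [← hσ, boxY_sub, Dscale_sub, hgood', hgood]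
      have hτ : ψ₁' - ψ1sol ηinv l φ₀ = 0 :=
        yUnique η ηinv hd hsymm hinv (μl l) _ heq
      have hzero : zRes φ' - ψsol ηinv l φ₀ = 0 := by
        rw [hσ, hτ, mul_zero]
      exact sub_eq_zero.mp hzero
    rw [hOp_det φ' hφ'h, hres]
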